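/- arXiv:2006.06040 — 3 statements merged into one kernel-verified Lean document; each statement's English description precedes it below -/
import Mathlib

section
/- Let (Ω, 𝔉, P) be a probability space with a filtration 𝔅₀ ⊆ 𝔅₁ ⊆ … ⊆ 𝔅ₙ, and let X₁, …, Xₙ be real random variables such that each Xᵢ is 𝔅ᵢ-measurable, E[Xᵢ | 𝔅_{i−1}] = 0 almost surely (a martingale difference sequence), and |Xᵢ| ≤ M almost surely for a constant M > 0. Let Vₙ = Σ_{j=1}^n E[Xⱼ² | 𝔅_{j−1}]. Then for any δ ∈ (0, 1/e), with probability at least 1 − δ, |Σ_{i=1}^n Xᵢ| ≤ 4·√(Vₙ · ln(2n/δ)) + 2·M·ln(2n/δ). -/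
/-!
For `|λ| M ≤ 1` one has `exp (λx) ≤ 1 + λx + λ²x²` on `[-M, M]`, so each increment satisfies
`E[exp (λXᵢ) | 𝔅ᵢ₋₁] ≤ exp (λ² E[Xᵢ² | 𝔅ᵢ₋₁])`. Hence `exp (λSₙ - λ²Vₙ)` is a supermartingale
with mean at most `1`, and by Markov's inequality applied to `±λ` the event
`λ|Sₙ| - λ²Vₙ ≥ L := log (2n/δ)` has probability at most `2e^{-L} = δ/n`. A union bound over
the `n` scales `λ = (2ʲM)⁻¹`, `j < n`, leaves an event of probability at least `1 - δ` on which
`|Sₙ| < 2ʲML + Vₙ/(2ʲM)` for every `j`. Since `Vₙ ≤ nM² ≤ 4ⁿM²L`, some scale has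
`2ʲM ≈ √(Vₙ/L)`, and it gives `|Sₙ| ≤ 3√(VₙL) + ML`.
-/

open MeasureTheory Finset Real

theorem exists_scale_le {n : ℕ} (hn : 0 < n) {M L V : ℝ} (hM : 0 < M) (hL : 0 ≤ L) (hV : 0 ≤ V)
    (hVn : V ≤ 4 ^ n * M ^ 2 * L) :
    ∃ j < n, L * (2 ^ j * M) + V / (2 ^ j * M) ≤ 3 * √(V * L) + M * L := by
  classical
  have hex : ∃ j : ℕ, V ≤ 4 ^ (j + 1) * M ^ 2 * L := ⟨n - 1, by rwa [Nat.sub_add_cancel hn]⟩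
  set j := Nat.find hex
  have hjn : j < n := by
    have := Nat.find_min' hex (show V ≤ 4 ^ (n - 1 + 1) * M ^ 2 * L by rwa [Nat.sub_add_cancel hn])
    omega
  refine ⟨j, hjn, ?_⟩
  set b : ℝ := 2 ^ j * M
  have hb : 0 < b := by positivity
  have hb2 : b ^ 2 = 4 ^ j * M ^ 2 := by rw [mul_pow, ← pow_mul, mul_comm j, pow_mul]; norm_num
  have hVb : V / b ≤ 2 * √(V * L) := by
    have hV4 : V ≤ 4 * b ^ 2 * L := calc
      V ≤ 4 ^ (j + 1) * M ^ 2 * L := Nat.find_spec hex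
      _ = 4 * b ^ 2 * L := by rw [hb2, pow_succ]; ring
    have : V / (2 * b) ≤ √(V * L) := Real.le_sqrt_of_sq_le <| by
      rw [div_pow, div_le_iff₀ (by positivity)]
      nlinarith [mul_le_mul_of_nonneg_left hV4 hV]
    calc V / b = 2 * (V / (2 * b)) := by field_simp
      _ ≤ 2 * √(V * L) := by gcongr
  have hLb : L * b ≤ √(V * L) + M * L := by
    rcases Nat.eq_zero_or_pos j with hj0 | hj0
    · simp [b, hj0, mul_comm L M, sqrt_nonneg]
    · have hmin : ¬V ≤ 4 ^ (j - 1 + 1) * M ^ 2 * L := Nat.find_min hex (Nat.sub_lt hj0 one_pos)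
      rw [Nat.sub_add_cancel hj0, not_le, ← hb2] at hmin
      have : L * b ≤ √(V * L) :=
        Real.le_sqrt_of_sq_le (by nlinarith [mul_le_mul_of_nonneg_left hmin.le hL])
      linarith [mul_nonneg hM.le hL]
  linarith

theorem le_of_forall_inv_mul_sub_lt {n : ℕ} (hn : 0 < n) {M L V s : ℝ} (hM : 0 < M) (hL : 0 ≤ L)
    (hV : 0 ≤ V) (hVn : V ≤ 4 ^ n * M ^ 2 * L)
    (h : ∀ j < n, (2 ^ j * M)⁻¹ * s - (2 ^ j * M)⁻¹ ^ 2 * V < L) :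
    s ≤ 3 * √(V * L) + M * L := by
  obtain ⟨j, hj, hscale⟩ := exists_scale_le hn hM hL hV hVn
  have hb : 0 < 2 ^ j * M := by positivity
  have hs : s = (2 ^ j * M) * ((2 ^ j * M)⁻¹ * s - (2 ^ j * M)⁻¹ ^ 2 * V) + V / (2 ^ j * M) := by
    field_simp
    ring
  have := mul_lt_mul_of_pos_left (h j hj) hb
  linarith

section

variable {Ω : Type*} {m0 : MeasurableSpace Ω} {μ : Measure Ω}

theorem ofReal_one_sub_le_of_measure_compl_le [IsProbabilityMeasure μ] {s : Set Ω} {δ : ℝ}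
    (hδ : 0 ≤ δ) (h : μ sᶜ ≤ ENNReal.ofReal δ) : ENNReal.ofReal (1 - δ) ≤ μ s := by
  rw [ENNReal.ofReal_sub 1 hδ, ENNReal.ofReal_one, tsub_le_iff_right]
  calc 1 = μ Set.univ := measure_univ.symm
    _ ≤ μ s + μ sᶜ := measure_univ_le_add_compl s
    _ ≤ μ s + ENNReal.ofReal δ := by gcongr

theorem integrable_exp_of_ae_le [IsFiniteMeasure μ] {F : Ω → ℝ} (hF : AEStronglyMeasurable F μ)
    {C : ℝ} (hC : ∀ᵐ ω ∂μ, F ω ≤ C) : Integrable (fun ω => exp (F ω)) μ :=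
  .of_bound (continuous_exp.comp_aestronglyMeasurable hF) (exp C) <| by
    filter_upwards [hC] with ω hω
    simpa only [norm_eq_abs, abs_exp] using exp_le_exp.2 hω

theorem integrable_exp_mul_of_abs_le [IsFiniteMeasure μ] {Y : Ω → ℝ} {M : ℝ}
    (hY : AEStronglyMeasurable Y μ) (hbdd : ∀ᵐ ω ∂μ, |Y ω| ≤ M) (l : ℝ) :
    Integrable (fun ω => exp (l * Y ω)) μ := by
  refine integrable_exp_of_ae_le (hY.const_mul l) (C := |l| * M) ?_
  filter_upwards [hbdd] with ω hω
  calc l * Y ω ≤ |l * Y ω| := le_abs_self _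
    _ = |l| * |Y ω| := abs_mul l (Y ω)
    _ ≤ |l| * M := mul_le_mul_of_nonneg_left hω (abs_nonneg l)

theorem integral_mul_le_integral_mul_of_condExp_le {m : MeasurableSpace Ω} (hm : m ≤ m0)
    [SigmaFinite (μ.trim hm)] {G f g : Ω → ℝ} (hG : StronglyMeasurable[m] G) (hG0 : 0 ≤ G)
    (hf : Integrable f μ) (hGf : Integrable (G * f) μ) (hGg : Integrable (G * g) μ)
    (hfg : μ[f | m] ≤ᵐ[μ] g) : ∫ ω, G ω * f ω ∂μ ≤ ∫ ω, G ω * g ω ∂μ := by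
  have hpull : μ[G * f | m] =ᵐ[μ] G * μ[f | m] := condExp_mul_of_stronglyMeasurable_left hG hGf hf
  calc ∫ ω, G ω * f ω ∂μ = ∫ ω, μ[G * f | m] ω ∂μ := (integral_condExp hm).symm
    _ = ∫ ω, G ω * μ[f | m] ω ∂μ := integral_congr_ae hpull
    _ ≤ ∫ ω, G ω * g ω ∂μ := by
      refine integral_mono_ae (integrable_condExp.congr hpull) hGg ?_
      filter_upwards [hfg] with ω hω
      exact mul_le_mul_of_nonneg_left hω (hG0 ω)

theorem condExp_exp_mul_le {m : MeasurableSpace Ω} [IsFiniteMeasure μ] (hm : m ≤ m0)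
    {Y : Ω → ℝ} {M l : ℝ} (hY : AEStronglyMeasurable[m0] Y μ) (hbdd : ∀ᵐ ω ∂μ, |Y ω| ≤ M)
    (hl : |l| * M ≤ 1) (hmean : μ[Y | m] =ᵐ[μ] 0) :
    μ[fun ω => exp (l * Y ω) | m] ≤ᵐ[μ] fun ω => exp (l ^ 2 * μ[fun ω => Y ω ^ 2 | m] ω) := by
  have hlY : ∀ᵐ ω ∂μ, |l * Y ω| ≤ 1 := by
    filter_upwards [hbdd] with ω hω
    rw [abs_mul]
    exact (mul_le_mul_of_nonneg_left hω (abs_nonneg l)).trans hl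
  have hYint : Integrable Y μ := .of_bound hY M (by simpa only [norm_eq_abs] using hbdd)
  have hY2int : Integrable (fun ω => Y ω ^ 2) μ :=
    .of_bound (hY.pow 2) (M ^ 2) <| by
      filter_upwards [hbdd] with ω hω
      simpa only [norm_pow, norm_eq_abs] using pow_le_pow_left₀ (abs_nonneg _) hω 2
  set q : Ω → ℝ := (fun _ => 1) + l • Y + l ^ 2 • fun ω => Y ω ^ 2 with hq
  have hq_int : Integrable q μ := ((integrable_const 1).add (hYint.smul l)).add (hY2int.smul _)
  have hexp_le : (fun ω => exp (l * Y ω)) ≤ᵐ[μ] q := by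
    filter_upwards [hlY] with ω hω
    have := (abs_le.1 (abs_exp_sub_one_sub_id_le hω)).2
    simp only [hq, Pi.add_apply, Pi.smul_apply, smul_eq_mul]
    linarith [mul_pow l (Y ω) 2]
  have hcond_q : μ[q | m] =ᵐ[μ] fun ω => 1 + l ^ 2 * μ[fun ω => Y ω ^ 2 | m] ω := by
    filter_upwards [condExp_add ((integrable_const 1).add (hYint.smul l)) (hY2int.smul (l ^ 2)) m,
      condExp_add (integrable_const 1) (hYint.smul l) m, condExp_smul l Y m,
      condExp_smul (l ^ 2) (fun ω => Y ω ^ 2) m, hmean] with ω h1 h2 h3 h4 h5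
    simp only [hq, h1, Pi.add_apply, h2, h3, h4, condExp_const hm, Pi.smul_apply, h5,
      Pi.zero_apply, smul_eq_mul]
    ring
  filter_upwards [condExp_mono (integrable_exp_mul_of_abs_le hY hbdd l) hq_int hexp_le, hcond_q]
    with ω h1 h2
  linarith [add_one_le_exp (l ^ 2 * μ[fun ω => Y ω ^ 2 | m] ω)]

end

section

variable {Ω : Type*} {m0 : MeasurableSpace Ω} (μ : Measure Ω) (𝔅 : Filtration ℕ m0)
  (X : ℕ → Ω → ℝ)

noncomputable def predictableQuadVar (n : ℕ) (ω : Ω) : ℝ :=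
  ∑ j ∈ Icc 1 n, μ[fun ω' => X j ω' ^ 2 | 𝔅 (j - 1)] ω

variable {μ 𝔅 X} {n : ℕ}

theorem predictableQuadVar_succ (ω : Ω) :
    predictableQuadVar μ 𝔅 X (n + 1) ω =
      predictableQuadVar μ 𝔅 X n ω + μ[fun ω' => X (n + 1) ω' ^ 2 | 𝔅 n] ω := by
  simp only [predictableQuadVar, sum_Icc_succ_top (Nat.le_add_left 1 n), add_tsub_cancel_right]

theorem stronglyMeasurable_sum_Icc (hadapted : ∀ i ∈ Icc 1 n, StronglyMeasurable[𝔅 i] (X i)) :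
    StronglyMeasurable[𝔅 n] fun ω => ∑ i ∈ Icc 1 n, X i ω :=
  Finset.stronglyMeasurable_fun_sum _ fun i hi => (hadapted i hi).mono (𝔅.mono (mem_Icc.1 hi).2)

theorem stronglyMeasurable_predictableQuadVar :
    StronglyMeasurable[𝔅 (n - 1)] (predictableQuadVar μ 𝔅 X n) := by
  refine Finset.stronglyMeasurable_fun_sum _ fun j hj => ?_
  exact stronglyMeasurable_condExp.mono (𝔅.mono (Nat.sub_le_sub_right (mem_Icc.1 hj).2 1))

theorem ae_predictableQuadVar_nonneg : ∀ᵐ ω ∂μ, 0 ≤ predictableQuadVar μ 𝔅 X n ω := by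
  have h : ∀ j ∈ Icc 1 n, ∀ᵐ ω ∂μ, 0 ≤ μ[fun ω' => X j ω' ^ 2 | 𝔅 (j - 1)] ω :=
    fun j _ => condExp_nonneg (ae_of_all _ fun ω => sq_nonneg (X j ω))
  filter_upwards [(Filter.eventually_all_finset _).2 h] with ω hω
  exact sum_nonneg hω

theorem ae_predictableQuadVar_le {M : ℝ} (hbdd : ∀ i ∈ Icc 1 n, ∀ᵐ ω ∂μ, |X i ω| ≤ M) :
    ∀ᵐ ω ∂μ, predictableQuadVar μ 𝔅 X n ω ≤ n * M ^ 2 := by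
  have h : ∀ j ∈ Icc 1 n, ∀ᵐ ω ∂μ, |μ[fun ω' => X j ω' ^ 2 | 𝔅 (j - 1)] ω| ≤ M ^ 2 := by
    intro j hj
    refine ae_bdd_abs_condExp_of_ae_bdd_abs ?_
    filter_upwards [hbdd j hj] with ω hω
    simpa only [abs_pow] using pow_le_pow_left₀ (abs_nonneg _) hω 2
  filter_upwards [(Filter.eventually_all_finset _).2 h] with ω hω
  calc predictableQuadVar μ 𝔅 X n ω ≤ ∑ _j ∈ Icc 1 n, M ^ 2 :=
        sum_le_sum fun j hj => (abs_le.1 (hω j hj)).2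
    _ = n * M ^ 2 := by simp

theorem ae_abs_sum_Icc_le {M : ℝ} (hbdd : ∀ i ∈ Icc 1 n, ∀ᵐ ω ∂μ, |X i ω| ≤ M) :
    ∀ᵐ ω ∂μ, |∑ i ∈ Icc 1 n, X i ω| ≤ n * M := by
  filter_upwards [(Filter.eventually_all_finset _).2 hbdd] with ω hω
  calc |∑ i ∈ Icc 1 n, X i ω| ≤ ∑ i ∈ Icc 1 n, |X i ω| := abs_sum_le_sum_abs _ _
    _ ≤ ∑ _i ∈ Icc 1 n, M := sum_le_sum hω
    _ = n * M := by simp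

end

section

variable {Ω : Type*} {m0 : MeasurableSpace Ω} {μ : Measure Ω} {𝔅 : Filtration ℕ m0}
  {X : ℕ → Ω → ℝ} {M : ℝ} {n : ℕ}

theorem integrable_exp_mul_sum_sub [IsFiniteMeasure μ]
    (hadapted : ∀ i ∈ Icc 1 n, StronglyMeasurable[𝔅 i] (X i))
    (hbdd : ∀ i ∈ Icc 1 n, ∀ᵐ ω ∂μ, |X i ω| ≤ M) (l : ℝ) :
    Integrable (fun ω => exp (l * ∑ i ∈ Icc 1 n, X i ω - l ^ 2 * predictableQuadVar μ 𝔅 X n ω))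
      μ := by
  have hS := (stronglyMeasurable_sum_Icc hadapted).mono (𝔅.le n)
  have hV := (stronglyMeasurable_predictableQuadVar (μ := μ) (X := X)).mono (𝔅.le (n - 1))
  refine integrable_exp_of_ae_le (by fun_prop) (C := |l| * (n * M)) ?_
  filter_upwards [ae_abs_sum_Icc_le hbdd, ae_predictableQuadVar_nonneg] with ω hS_le hV0
  have hlS := (le_abs_self _).trans_eq (abs_mul l (∑ i ∈ Icc 1 n, X i ω))
  nlinarith [mul_le_mul_of_nonneg_left hS_le (abs_nonneg l), mul_nonneg (sq_nonneg l) hV0]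

theorem integral_exp_mul_sum_sub_succ_le [IsFiniteMeasure μ]
    (hadapted : ∀ i ∈ Icc 1 (n + 1), StronglyMeasurable[𝔅 i] (X i))
    (hmds : μ[X (n + 1) | 𝔅 n] =ᵐ[μ] 0) (hbdd : ∀ i ∈ Icc 1 (n + 1), ∀ᵐ ω ∂μ, |X i ω| ≤ M)
    {l : ℝ} (hl : |l| * M ≤ 1) :
    ∫ ω, exp (l * ∑ i ∈ Icc 1 (n + 1), X i ω - l ^ 2 * predictableQuadVar μ 𝔅 X (n + 1) ω) ∂μ ≤
      ∫ ω, exp (l * ∑ i ∈ Icc 1 n, X i ω - l ^ 2 * predictableQuadVar μ 𝔅 X n ω) ∂μ := by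
  have hsub : Icc 1 n ⊆ Icc 1 (n + 1) := Icc_subset_Icc_right n.le_succ
  have hlast : n + 1 ∈ Icc 1 (n + 1) := right_mem_Icc.2 n.succ_pos
  have hS := stronglyMeasurable_sum_Icc fun i hi => hadapted i (hsub hi)
  have hV : StronglyMeasurable[𝔅 n] (predictableQuadVar μ 𝔅 X (n + 1)) := by
    simpa using stronglyMeasurable_predictableQuadVar (μ := μ) (𝔅 := 𝔅) (X := X) (n := n + 1)
  set G : Ω → ℝ := fun ω =>
    exp (l * ∑ i ∈ Icc 1 n, X i ω - l ^ 2 * predictableQuadVar μ 𝔅 X (n + 1) ω)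
  have hG : StronglyMeasurable[𝔅 n] G := by fun_prop
  have hsplit_succ : ∀ ω, exp (l * ∑ i ∈ Icc 1 (n + 1), X i ω
      - l ^ 2 * predictableQuadVar μ 𝔅 X (n + 1) ω) = G ω * exp (l * X (n + 1) ω) := by
    intro ω
    rw [sum_Icc_succ_top (Nat.le_add_left 1 n), ← exp_add]
    ring_nf
  have hsplit : ∀ ω, exp (l * ∑ i ∈ Icc 1 n, X i ω - l ^ 2 * predictableQuadVar μ 𝔅 X n ω) =
      G ω * exp (l ^ 2 * μ[fun ω' => X (n + 1) ω' ^ 2 | 𝔅 n] ω) := by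
    intro ω
    rw [← exp_add, predictableQuadVar_succ]
    ring_nf
  have hint_succ := integrable_exp_mul_sum_sub hadapted hbdd l (μ := μ)
  have hint := integrable_exp_mul_sum_sub (fun i hi => hadapted i (hsub hi))
    (fun i hi => hbdd i (hsub hi)) l (μ := μ)
  simp only [hsplit_succ] at hint_succ ⊢
  simp only [hsplit] at hint ⊢
  have hXn : AEStronglyMeasurable (X (n + 1)) μ :=
    ((hadapted _ hlast).mono (𝔅.le _)).aestronglyMeasurable
  exact integral_mul_le_integral_mul_of_condExp_le (𝔅.le n) hG (fun ω => (exp_pos _).le)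
    (integrable_exp_mul_of_abs_le hXn (hbdd _ hlast) l) hint_succ hint
    (condExp_exp_mul_le (𝔅.le n) hXn (hbdd _ hlast) hl hmds)

theorem integral_exp_mul_sum_sub_le_one [IsProbabilityMeasure μ]
    (hadapted : ∀ i ∈ Icc 1 n, StronglyMeasurable[𝔅 i] (X i))
    (hmds : ∀ i ∈ Icc 1 n, μ[X i | 𝔅 (i - 1)] =ᵐ[μ] 0)
    (hbdd : ∀ i ∈ Icc 1 n, ∀ᵐ ω ∂μ, |X i ω| ≤ M) {l : ℝ} (hl : |l| * M ≤ 1) :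
    ∫ ω, exp (l * ∑ i ∈ Icc 1 n, X i ω - l ^ 2 * predictableQuadVar μ 𝔅 X n ω) ∂μ ≤ 1 := by
  induction n with
  | zero => simp [predictableQuadVar]
  | succ n ih =>
    have hsub : Icc 1 n ⊆ Icc 1 (n + 1) := Icc_subset_Icc_right n.le_succ
    have hlast : n + 1 ∈ Icc 1 (n + 1) := right_mem_Icc.2 n.succ_pos
    refine (integral_exp_mul_sum_sub_succ_le hadapted (by simpa using hmds _ hlast) hbdd hl).trans
      ?_
    exact ih (fun i hi => hadapted i (hsub hi)) (fun i hi => hmds i (hsub hi))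
      (fun i hi => hbdd i (hsub hi))

theorem measure_le_mul_sum_sub_le [IsProbabilityMeasure μ]
    (hadapted : ∀ i ∈ Icc 1 n, StronglyMeasurable[𝔅 i] (X i))
    (hmds : ∀ i ∈ Icc 1 n, μ[X i | 𝔅 (i - 1)] =ᵐ[μ] 0)
    (hbdd : ∀ i ∈ Icc 1 n, ∀ᵐ ω ∂μ, |X i ω| ≤ M) {l : ℝ} (hl : |l| * M ≤ 1) (L : ℝ) :
    μ {ω | L ≤ l * ∑ i ∈ Icc 1 n, X i ω - l ^ 2 * predictableQuadVar μ 𝔅 X n ω} ≤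
      ENNReal.ofReal (exp (-L)) := by
  have hchernoff := ProbabilityTheory.measure_ge_le_exp_mul_mgf L zero_le_one
    (X := fun ω => l * ∑ i ∈ Icc 1 n, X i ω - l ^ 2 * predictableQuadVar μ 𝔅 X n ω)
    (by simpa only [one_mul] using integrable_exp_mul_sum_sub hadapted hbdd l)
  rw [← ofReal_measureReal]
  refine ENNReal.ofReal_le_ofReal (hchernoff.trans ?_)
  simp only [ProbabilityTheory.mgf, one_mul, neg_one_mul]
  exact mul_le_of_le_one_right (exp_pos _).le
    (integral_exp_mul_sum_sub_le_one hadapted hmds hbdd hl)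

theorem measure_le_mul_abs_sum_sub_le [IsProbabilityMeasure μ]
    (hadapted : ∀ i ∈ Icc 1 n, StronglyMeasurable[𝔅 i] (X i))
    (hmds : ∀ i ∈ Icc 1 n, μ[X i | 𝔅 (i - 1)] =ᵐ[μ] 0)
    (hbdd : ∀ i ∈ Icc 1 n, ∀ᵐ ω ∂μ, |X i ω| ≤ M) {l : ℝ} (hl0 : 0 ≤ l) (hl : l * M ≤ 1)
    (L : ℝ) :
    μ {ω | L ≤ l * |∑ i ∈ Icc 1 n, X i ω| - l ^ 2 * predictableQuadVar μ 𝔅 X n ω} ≤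
      ENNReal.ofReal (2 * exp (-L)) := by
  have hsub : {ω | L ≤ l * |∑ i ∈ Icc 1 n, X i ω| - l ^ 2 * predictableQuadVar μ 𝔅 X n ω} ⊆
      {ω | L ≤ l * ∑ i ∈ Icc 1 n, X i ω - l ^ 2 * predictableQuadVar μ 𝔅 X n ω} ∪
      {ω | L ≤ (-l) * ∑ i ∈ Icc 1 n, X i ω - (-l) ^ 2 * predictableQuadVar μ 𝔅 X n ω} := by
    intro ω hω
    rcases abs_choice (∑ i ∈ Icc 1 n, X i ω) with h | h
    · left; simpa [h] using hω
    · right; simpa [h] using hω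
  calc _ ≤ _ := measure_mono hsub
    _ ≤ _ := measure_union_le _ _
    _ ≤ ENNReal.ofReal (exp (-L)) + ENNReal.ofReal (exp (-L)) := by
      gcongr <;> refine measure_le_mul_sum_sub_le hadapted hmds hbdd ?_ L
      · rwa [abs_of_nonneg hl0]
      · rwa [abs_neg, abs_of_nonneg hl0]
    _ = ENNReal.ofReal (2 * exp (-L)) := by
      rw [two_mul, ENNReal.ofReal_add (exp_pos _).le (exp_pos _).le]

theorem measure_biUnion_scales_le [IsProbabilityMeasure μ]
    (hadapted : ∀ i ∈ Icc 1 n, StronglyMeasurable[𝔅 i] (X i))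
    (hmds : ∀ i ∈ Icc 1 n, μ[X i | 𝔅 (i - 1)] =ᵐ[μ] 0)
    (hbdd : ∀ i ∈ Icc 1 n, ∀ᵐ ω ∂μ, |X i ω| ≤ M) (hM : 0 < M) (L : ℝ) :
    μ (⋃ j ∈ range n, {ω | L ≤ (2 ^ j * M)⁻¹ * |∑ i ∈ Icc 1 n, X i ω|
        - (2 ^ j * M)⁻¹ ^ 2 * predictableQuadVar μ 𝔅 X n ω}) ≤
      ENNReal.ofReal (n * (2 * exp (-L))) := by
  have hscale : ∀ j : ℕ, (2 ^ j * M)⁻¹ * M ≤ 1 := fun j => by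
    rw [mul_inv, mul_assoc, inv_mul_cancel₀ hM.ne', mul_one]
    exact inv_le_one_of_one_le₀ (one_le_pow₀ one_le_two)
  calc _ ≤ _ := measure_biUnion_finset_le _ _
    _ ≤ (range n).card • ENNReal.ofReal (2 * exp (-L)) := sum_le_card_nsmul _ _ _ fun j _ =>
        measure_le_mul_abs_sum_sub_le hadapted hmds hbdd (by positivity) (hscale j) L
    _ = ENNReal.ofReal (n * (2 * exp (-L))) := by
      rw [card_range, ← ENNReal.ofReal_nsmul, nsmul_eq_mul]

end

/-- Freedman-style inequality for martingale difference sequences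
(Lemma 2 of Bartlett et al., as used in the paper). -/
theorem freedman_martingale_difference_concentration
    {Ω : Type*} {m0 : MeasurableSpace Ω} {μ : Measure Ω} [IsProbabilityMeasure μ]
    (n : ℕ) (𝔅 : Filtration ℕ m0) (X : ℕ → Ω → ℝ) (M : ℝ) (hM : 0 < M)
    (hadapted : ∀ i ∈ Finset.Icc 1 n, StronglyMeasurable[𝔅 i] (X i))
    (hmds : ∀ i ∈ Finset.Icc 1 n, μ[X i | 𝔅 (i - 1)] =ᵐ[μ] 0)
    (hbdd : ∀ i ∈ Finset.Icc 1 n, ∀ᵐ ω ∂μ, |X i ω| ≤ M)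
    (δ : ℝ) (hδ : δ ∈ Set.Ioo (0 : ℝ) (1 / Real.exp 1)) :
    ENNReal.ofReal (1 - δ) ≤
      μ {ω | |∑ i ∈ Finset.Icc 1 n, X i ω| ≤
        4 * Real.sqrt ((∑ j ∈ Finset.Icc 1 n,
            (μ[(fun ω' => (X j ω') ^ 2) | 𝔅 (j - 1)]) ω) * Real.log (2 * n / δ))
          + 2 * M * Real.log (2 * n / δ)} := by
  obtain ⟨hδ0, hδe⟩ := hδ
  rcases n.eq_zero_or_pos with rfl | hn
  · simpa using ENNReal.ofReal_le_one.2 (sub_le_self 1 hδ0.le)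
  have h2nδ : 0 < 2 * n / δ := by positivity
  set L := log (2 * n / δ)
  have hL : 1 ≤ L := by
    rw [le_log_iff_exp_le h2nδ, le_div_iff₀ hδ0]
    have := (lt_div_iff₀ (exp_pos 1)).1 hδe
    have : (1 : ℝ) ≤ n := by exact_mod_cast hn
    linarith
  have hbad := measure_biUnion_scales_le hadapted hmds hbdd hM L (μ := μ)
  rw [show n * (2 * exp (-L)) = δ by rw [exp_neg, exp_log h2nδ]; field_simp] at hbad
  refine ofReal_one_sub_le_of_measure_compl_le hδ0.le ((measure_mono_ae ?_).trans hbad)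
  filter_upwards [ae_predictableQuadVar_nonneg (𝔅 := 𝔅) (X := X) (n := n),
    ae_predictableQuadVar_le (𝔅 := 𝔅) hbdd] with ω hV0 hVn hω
  have hV4 : predictableQuadVar μ 𝔅 X n ω ≤ 4 ^ n * M ^ 2 * L := calc
    _ ≤ n * M ^ 2 := hVn
    _ ≤ 4 ^ n * M ^ 2 := by gcongr; exact_mod_cast (Nat.lt_pow_self (by norm_num : 1 < 4)).le
    _ ≤ 4 ^ n * M ^ 2 * L := le_mul_of_one_le_right (by positivity) hL
  refine hω.imp_symm fun hgood => ?_
  have := le_of_forall_inv_mul_sub_lt hn hM (by linarith) hV0 hV4 fun j hj =>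
    not_le.1 fun hj_bad => hgood (Set.mem_biUnion (mem_range.2 hj) hj_bad)
  show |∑ i ∈ Icc 1 n, X i ω| ≤ 4 * √(predictableQuadVar μ 𝔅 X n ω * L) + 2 * M * L
  linarith [sqrt_nonneg (predictableQuadVar μ 𝔅 X n ω * L), mul_pos hM (by linarith : 0 < L)]
end

section
/- Let g, σ, ĝ ≥ 0 be real numbers satisfying |ĝ − g| ≤ √(g·σ) + σ. Then g ≤ ĝ + √(ĝ·σ) + 3σ. -/
/-- Deviation inversion: if |ĝ - g| ≤ √(g·σ) + σ for nonnegative reals, then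
g ≤ ĝ + √(ĝ·σ) + 3σ. -/
theorem deviation_inversion
    (g σ ghat : ℝ) (hg : 0 ≤ g) (hσ : 0 ≤ σ) (hghat : 0 ≤ ghat)
    (h : |ghat - g| ≤ Real.sqrt (g * σ) + σ) :
    g ≤ ghat + Real.sqrt (ghat * σ) + 3 * σ := by
  rw [Real.sqrt_mul hg] at h
  rw [Real.sqrt_mul hghat]
  set x := Real.sqrt g with hx
  set a := Real.sqrt ghat with ha
  set s := Real.sqrt σ with hs
  have hx2 : x ^ 2 = g := Real.sq_sqrt hg
  have ha2 : a ^ 2 = ghat := Real.sq_sqrt hghat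
  have hs2 : s ^ 2 = σ := Real.sq_sqrt hσ
  have hx0 : 0 ≤ x := Real.sqrt_nonneg _
  have ha0 : 0 ≤ a := Real.sqrt_nonneg _
  have hs0 : 0 ≤ s := Real.sqrt_nonneg _
  have h' : g - ghat ≤ x * s + σ := by
    have := abs_le.mp h
    linarith [this.1]
  nlinarith [sq_nonneg (x - a - 2 * s), sq_nonneg (x - a), sq_nonneg (x + a),
    mul_nonneg hs0 (mul_nonneg hx0 hx0), mul_nonneg ha0 hs0, mul_nonneg hx0 hs0]
end

section
/- Let J be a finite nonempty set, and let ĝ, g, σ : J → ℝ satisfy, for every j ∈ J: ĝ(j) ≥ 0, 0 ≤ g(j) ≤ 1, σ(j) ≥ 0, and |ĝ(j) − g(j)| ≤ √(g(j)·σ(j)) + σ(j). Let ĵ ∈ J minimize the penalized empirical objective j ↦ ĝ(j) + √(ĝ(j)·σ(j)) + 3σ(j) over J. Then for every j ∈ J: (i) g(ĵ) ≤ g(j) + 3·√(g(j)·σ(j)) + 6·σ(j), and consequently (ii) g(ĵ) ≤ g(j) + 9·√(σ(j)). -/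
/-- Quadratic self-bounding: if `x² ≤ s² + xσ + σ²` then `x ≤ s + 2σ`. -/
lemma srm_quad_aux {x s σ : ℝ} (hx : 0 ≤ x) (hs : 0 ≤ s) (hσ : 0 ≤ σ)
    (h : x^2 ≤ s^2 + x*σ + σ^2) : x ≤ s + 2*σ := by
  by_contra hc
  push_neg at hc
  nlinarith [mul_nonneg hs hσ, mul_nonneg hx hσ]

/-- Structural risk minimization guarantee: if ĝ(j) estimates g(j) ∈ [0,1] with
self-bounding deviations √(g(j)σ(j)) + σ(j), and ĵ minimizes the penalized
empirical objective ĝ(j) + √(ĝ(j)σ(j)) + 3σ(j), then for every j,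
g(ĵ) ≤ g(j) + 3√(g(j)σ(j)) + 6σ(j), and consequently g(ĵ) ≤ g(j) + 9√(σ(j)). -/
theorem srm_model_selection
    {J : Type*} [Fintype J] [Nonempty J]
    (ghat g σ : J → ℝ)
    (hghat : ∀ j, 0 ≤ ghat j) (hg : ∀ j, g j ∈ Set.Icc (0 : ℝ) 1)
    (hσ : ∀ j, 0 ≤ σ j)
    (hconc : ∀ j, |ghat j - g j| ≤ Real.sqrt (g j * σ j) + σ j)
    (jhat : J)
    (hmin : ∀ j, ghat jhat + Real.sqrt (ghat jhat * σ jhat) + 3 * σ jhat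
      ≤ ghat j + Real.sqrt (ghat j * σ j) + 3 * σ j) :
    ∀ j, g jhat ≤ g j + 3 * Real.sqrt (g j * σ j) + 6 * σ j ∧
      g jhat ≤ g j + 9 * Real.sqrt (σ j) := by
  intro j
  -- abbreviations
  set x := Real.sqrt (g jhat * σ jhat) with hxdef
  set s := Real.sqrt (ghat jhat * σ jhat) with hsdef
  set u := Real.sqrt (ghat j * σ j) with hudef
  set v := Real.sqrt (g j * σ j) with hvdef
  have hx0 : 0 ≤ x := Real.sqrt_nonneg _
  have hs0 : 0 ≤ s := Real.sqrt_nonneg _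
  have hu0 : 0 ≤ u := Real.sqrt_nonneg _
  have hv0 : 0 ≤ v := Real.sqrt_nonneg _
  have hx2 : x^2 = g jhat * σ jhat := Real.sq_sqrt (mul_nonneg (hg jhat).1 (hσ jhat))
  have hs2 : s^2 = ghat jhat * σ jhat := Real.sq_sqrt (mul_nonneg (hghat jhat) (hσ jhat))
  have hu2 : u^2 = ghat j * σ j := Real.sq_sqrt (mul_nonneg (hghat j) (hσ j))
  have hv2 : v^2 = g j * σ j := Real.sq_sqrt (mul_nonneg (hg j).1 (hσ j))
  -- concentration, unfolded
  have hc1 := abs_le.mp (hconc jhat)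
  have hc2 := abs_le.mp (hconc j)
  -- g ĵ ≤ ĝ ĵ + x + σ ĵ
  have hA : g jhat ≤ ghat jhat + x + σ jhat := by
    have := hc1.1; simp only [hxdef] at *; linarith
  -- ĝ j ≤ g j + v + σ j
  have hB : ghat j ≤ g j + v + σ j := by
    have := hc2.2; linarith
  -- Step 1: x ≤ s + 2 σ ĵ
  have hstep1 : x ≤ s + 2 * σ jhat := by
    apply srm_quad_aux hx0 hs0 (hσ jhat)
    have : g jhat * σ jhat ≤ (ghat jhat + x + σ jhat) * σ jhat :=
      mul_le_mul_of_nonneg_right hA (hσ jhat)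
    nlinarith
  -- Step 3: u ≤ v + σ j  (since ĝ j σ j ≤ (v + σ j)²)
  have hstep3 : u ≤ v + σ j := by
    have h1 : ghat j * σ j ≤ (g j + v + σ j) * σ j :=
      mul_le_mul_of_nonneg_right hB (hσ j)
    have h2 : u^2 ≤ (v + σ j)^2 := by nlinarith [mul_nonneg hv0 (hσ j)]
    nlinarith [hσ j]
  -- combine with minimality
  have hmin' := hmin j
  have hmain : g jhat ≤ g j + 3 * v + 6 * σ j := by
    have : g jhat ≤ ghat jhat + s + 3 * σ jhat := by linarith
    have h4 : g jhat ≤ ghat j + u + 3 * σ j := by linarith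
    nlinarith [hσ j]
  refine ⟨hmain, ?_⟩
  -- second claim
  rcases le_or_gt (σ j) 1 with hle | hgt
  · have ht0 : 0 ≤ Real.sqrt (σ j) := Real.sqrt_nonneg _
    have ht2 : (Real.sqrt (σ j))^2 = σ j := Real.sq_sqrt (hσ j)
    have hσt : σ j ≤ Real.sqrt (σ j) := by
      nlinarith [sq_nonneg (Real.sqrt (σ j) - 1)]
    have hvt : v ≤ Real.sqrt (σ j) := by
      rw [hvdef]
      apply Real.sqrt_le_sqrt
      nlinarith [(hg j).2, hσ j]
    linarith
  · have h1 : (1:ℝ) ≤ Real.sqrt (σ j) := by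
      rw [show (1:ℝ) = Real.sqrt 1 by simp]
      exact Real.sqrt_le_sqrt hgt.le
    have := (hg jhat).2
    have := (hg j).1
    linarith
end
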